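/- arXiv:1304.2961 — 3 statements merged into one kernel-verified Lean document; each statement's English description precedes it below -/
import Mathlib

section
/- For all m, n ∈ ℕ+, the total number s(m,n) of subgroups of the group ℤ_m × ℤ_n equals Σ_{a ∣ m} Σ_{b ∣ n} gcd(a,b), the double sum running over all positive divisors a of m and b of n. -/
/-!
Every subgroup `H` of `ℤ_m × ℤ_n` is generated by `(a, 0)` and `(c, d)` for unique `a ∣ m`,
`d ∣ n` and `c < a` with `a ∣ (n / d) * c` (a Hermite normal form): `⟨a⟩` is the
intersection of `H` with `ℤ_m × 0`, `⟨d⟩` is the projection of `H` to `ℤ_n`, and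
`(c, d) ∈ H` fixes `c` modulo `a`; the divisibility says that `(n / d) • (c, d) ∈ ℤ_m × 0`
lies in `⟨a⟩`. For given `a` and `d` the admissible `c < a` are the multiples of
`a / gcd(a, n / d)`, so there are `gcd(a, n / d)` of them, and replacing `d` by `n / d` in
the sum gives the formula.
-/

open AddSubgroup Finset

theorem Nat.dvd_mul_iff_div_gcd_dvd {a : ℕ} (ha : 0 < a) (e c : ℕ) :
    a ∣ e * c ↔ a / a.gcd e ∣ c := by
  set g := a.gcd e
  have hg : 0 < g := Nat.gcd_pos_of_pos_left e ha
  calc a ∣ e * c ↔ a / g * g ∣ e / g * c * g := by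
        rw [Nat.div_mul_cancel (Nat.gcd_dvd_left a e), mul_right_comm,
          Nat.div_mul_cancel (Nat.gcd_dvd_right a e)]
    _ ↔ a / g ∣ e / g * c := Nat.mul_dvd_mul_iff_right hg
    _ ↔ a / g ∣ c := (Nat.coprime_div_gcd_div_gcd hg).dvd_mul_left

theorem Nat.card_filter_range_dvd_mul {a : ℕ} (ha : 0 < a) (e : ℕ) :
    #{c ∈ range a | a ∣ e * c} = a.gcd e := by
  have hga : a.gcd e ∣ a := Nat.gcd_dvd_left a e
  have hk : 0 < a / a.gcd e := Nat.div_pos (Nat.le_of_dvd ha hga) (Nat.gcd_pos_of_pos_left e ha)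
  simp_rw [Nat.dvd_mul_iff_div_gcd_dvd ha, ← Nat.modEq_zero_iff_dvd,
    ← Nat.count_eq_card_filter_range, Nat.count_modEq_card _ hk, Nat.zero_mod,
    Nat.mod_eq_zero_of_dvd (Nat.div_dvd_of_dvd hga),
    lt_irrefl, if_false, add_zero, Nat.div_div_self hga ha.ne']

namespace ZMod

theorem intCast_mem_zmultiples_natCast_iff {m a : ℕ} (ha : a ∣ m) (x : ℤ) :
    (x : ZMod m) ∈ zmultiples (a : ZMod m) ↔ (a : ℤ) ∣ x := by
  constructor
  · rintro ⟨k, hk : k • (a : ZMod m) = x⟩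
    have hm : (m : ℤ) ∣ k * a - x := by
      rw [← intCast_zmod_eq_zero_iff_dvd]
      push_cast
      rw [← hk, zsmul_eq_mul, sub_self]
    have := (Int.natCast_dvd_natCast.2 ha).trans hm
    exact (dvd_sub_right (dvd_mul_left _ _)).1 this
  · rintro ⟨j, rfl⟩
    exact ⟨j, by push_cast [zsmul_eq_mul]; ring⟩

theorem natCast_mem_zmultiples_natCast_iff {m a : ℕ} (ha : a ∣ m) (x : ℕ) :
    (x : ZMod m) ∈ zmultiples (a : ZMod m) ↔ a ∣ x := by
  exact_mod_cast intCast_mem_zmultiples_natCast_iff ha x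

theorem eq_of_zmultiples_natCast_eq {m a b : ℕ} (ha : a ∣ m) (hb : b ∣ m)
    (h : zmultiples (a : ZMod m) = zmultiples (b : ZMod m)) : a = b := by
  apply Nat.dvd_antisymm
  · rw [← natCast_mem_zmultiples_natCast_iff ha, h]
    exact mem_zmultiples _
  · rw [← natCast_mem_zmultiples_natCast_iff hb, ← h]
    exact mem_zmultiples _

theorem exists_dvd_eq_zmultiples {m : ℕ} (H : AddSubgroup (ZMod m)) :
    ∃ a, a ∣ m ∧ H = zmultiples (a : ZMod m) := by
  obtain ⟨g, hg⟩ := Int.subgroup_cyclic (H.comap (Int.castAddHom (ZMod m)))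
  rw [← zmultiples_eq_closure, ← Int.zmultiples_natAbs] at hg
  have hm : (m : ℤ) ∈ H.comap (Int.castAddHom (ZMod m)) := by simp
  rw [hg, Int.mem_zmultiples_iff] at hm
  refine ⟨g.natAbs, Int.natCast_dvd_natCast.1 hm, ?_⟩
  rw [← map_comap_eq_self_of_surjective (f := Int.castAddHom (ZMod m)) intCast_surjective H,
    hg, AddMonoidHom.map_zmultiples]
  simp

theorem zsmul_natCast_eq_zero_iff {n d : ℕ} (hd : d ∣ n) (hd0 : d ≠ 0) (t : ℤ) :
    t • (d : ZMod n) = 0 ↔ ((n / d : ℕ) : ℤ) ∣ t := by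
  rw [← addOrderOf_dvd_iff_zsmul_eq_zero, addOrderOf_coe' n hd0, Nat.gcd_eq_right hd]

end ZMod

theorem AddSubgroup.eq_of_le_of_comap_inl_le_of_map_snd_le {G H : Type*} [AddGroup G]
    [AddGroup H] {K L : AddSubgroup (G × H)} (hle : K ≤ L)
    (hinl : L.comap (AddMonoidHom.inl G H) ≤ K.comap (AddMonoidHom.inl G H))
    (hsnd : L.map (AddMonoidHom.snd G H) ≤ K.map (AddMonoidHom.snd G H)) : K = L := by
  refine le_antisymm hle fun z hz => ?_
  obtain ⟨k, hk, hk2⟩ := hsnd ⟨z, hz, rfl⟩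
  have hdiff : z - k = AddMonoidHom.inl G H (z.1 - k.1) := Prod.ext rfl (sub_eq_zero.2 hk2.symm)
  have hdiffK : z - k ∈ K := hdiff ▸ hinl (hdiff ▸ L.sub_mem hz (hle hk) : _ ∈ L)
  simpa using K.add_mem hdiffK hk

def echelonSubgroup (m n a d c : ℕ) : AddSubgroup (ZMod m × ZMod n) :=
  closure {((a : ZMod m), 0), ((c : ZMod m), (d : ZMod n))}

def echelonParams (m n : ℕ) : Finset ((_ : ℕ × ℕ) × ℕ) :=
  (m.divisors ×ˢ n.divisors).sigma fun p => {c ∈ range p.1 | p.1 ∣ n / p.2 * c}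

section echelonSubgroup

variable {m n a d c : ℕ}

theorem inl_mem_echelonSubgroup : ((a : ZMod m), (0 : ZMod n)) ∈ echelonSubgroup m n a d c :=
  subset_closure (Set.mem_insert _ _)

theorem mem_echelonSubgroup : ((c : ZMod m), (d : ZMod n)) ∈ echelonSubgroup m n a d c :=
  subset_closure (Set.mem_insert_of_mem _ rfl)

theorem map_snd_echelonSubgroup :
    (echelonSubgroup m n a d c).map (AddMonoidHom.snd _ _) = zmultiples (d : ZMod n) := by
  refine le_antisymm ?_ (zmultiples_le.2 ⟨_, mem_echelonSubgroup, rfl⟩)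
  rw [map_le_iff_le_comap, echelonSubgroup, closure_le]
  rintro z (rfl | rfl)
  · exact zero_mem (zmultiples (d : ZMod n))
  · exact mem_zmultiples _

theorem comap_inl_echelonSubgroup (hd : d ∣ n) (hd0 : d ≠ 0) (hc : a ∣ n / d * c) :
    (echelonSubgroup m n a d c).comap (AddMonoidHom.inl _ _) = zmultiples (a : ZMod m) := by
  refine le_antisymm (fun x hx => ?_) (zmultiples_le.2 inl_mem_echelonSubgroup)
  obtain ⟨s, t, hst⟩ := mem_closure_pair.1 hx
  obtain ⟨u, rfl⟩ : ((n / d : ℕ) : ℤ) ∣ t := by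
    rw [← ZMod.zsmul_natCast_eq_zero_iff hd hd0]
    simpa using congrArg Prod.snd hst
  obtain ⟨w, hw⟩ := hc
  generalize n / d = e at hst hw
  have hx : x = (s + u * w) • (a : ZMod m) := by
    have hw' : (e : ZMod m) * c = a * w := by rw [← Nat.cast_mul, hw, Nat.cast_mul]
    have := congrArg Prod.fst hst
    simp only [Prod.fst_add, Prod.smul_fst, AddMonoidHom.inl_apply] at this
    rw [← this]
    simp only [zsmul_eq_mul]
    push_cast
    linear_combination u * hw'
  exact hx ▸ zsmul_mem (mem_zmultiples _) _

theorem echelonSubgroup_injOn :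
    Set.InjOn (fun x : (_ : ℕ × ℕ) × ℕ => echelonSubgroup m n x.1.1 x.1.2 x.2)
      (echelonParams m n) := by
  rintro ⟨⟨a, d⟩, c⟩ hx ⟨⟨a', d'⟩, c'⟩ hx' h
  simp only [echelonParams, coe_sigma, Set.mem_sigma_iff, coe_product, Set.mem_prod, coe_filter,
    Set.mem_ofPred_eq, Nat.mem_divisors, mem_range, mem_coe] at hx hx' h
  obtain ⟨⟨⟨ha, -⟩, hd, hn⟩, hca, hc⟩ := hx
  obtain ⟨⟨⟨ha', -⟩, hd', -⟩, hca', hc'⟩ := hx'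
  have hd0 : d ≠ 0 := ne_zero_of_dvd_ne_zero hn hd
  obtain rfl : d = d' := ZMod.eq_of_zmultiples_natCast_eq hd hd' <| by
    rw [← map_snd_echelonSubgroup, h, map_snd_echelonSubgroup]
  obtain rfl : a = a' := ZMod.eq_of_zmultiples_natCast_eq ha ha' <| by
    rw [← comap_inl_echelonSubgroup hd hd0 hc, h, comap_inl_echelonSubgroup hd hd0 hc']
  have hc'mem : ((c' : ZMod m), (d : ZMod n)) ∈ echelonSubgroup m n a d c :=
    h ▸ mem_echelonSubgroup
  have hmem : AddMonoidHom.inl _ _ (((c' - c : ℤ)) : ZMod m) ∈ echelonSubgroup m n a d c := by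
    convert sub_mem hc'mem mem_echelonSubgroup using 1
    ext <;> simp
  rw [← mem_comap, comap_inl_echelonSubgroup hd hd0 hc,
    ZMod.intCast_mem_zmultiples_natCast_iff ha, ← Nat.modEq_iff_dvd] at hmem
  rw [hmem.eq_of_lt_of_lt hca hca']

theorem exists_mem_echelonParams_eq [NeZero m] [NeZero n] (H : AddSubgroup (ZMod m × ZMod n)) :
    ∃ x ∈ echelonParams m n, echelonSubgroup m n x.1.1 x.1.2 x.2 = H := by
  obtain ⟨a, ha, hA⟩ := ZMod.exists_dvd_eq_zmultiples (H.comap (AddMonoidHom.inl _ _))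
  obtain ⟨d, hd, hD⟩ := ZMod.exists_dvd_eq_zmultiples (H.map (AddMonoidHom.snd _ _))
  have ha0 : a ≠ 0 := ne_zero_of_dvd_ne_zero (NeZero.ne m) ha
  have hd0 : d ≠ 0 := ne_zero_of_dvd_ne_zero (NeZero.ne n) hd
  obtain ⟨z, hz, hzd⟩ : (d : ZMod n) ∈ H.map (AddMonoidHom.snd _ _) := hD ▸ mem_zmultiples _
  set c := z.1.val % a
  have hca : c < a := Nat.mod_lt _ (Nat.pos_of_ne_zero ha0)
  have hcd : ((c : ZMod m), (d : ZMod n)) ∈ H := by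
    have hq : AddMonoidHom.inl _ _ ((a * (z.1.val / a) : ℕ) : ZMod m) ∈ H := by
      rw [← mem_comap, hA, ZMod.natCast_mem_zmultiples_natCast_iff ha]
      exact dvd_mul_right _ _
    have hval : ((c + a * (z.1.val / a) : ℕ) : ZMod m) = z.1 := by
      rw [Nat.mod_add_div, ZMod.natCast_zmod_val]
    convert sub_mem hz hq using 1
    ext
    · simp only [Prod.fst_sub, AddMonoidHom.inl_apply]
      exact eq_sub_of_add_eq ((Nat.cast_add _ _).symm.trans hval)
    · simpa using hzd.symm
  have hc : a ∣ n / d * c := by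
    rw [← ZMod.natCast_mem_zmultiples_natCast_iff ha, ← hA, mem_comap]
    convert nsmul_mem hcd (n / d) using 1
    ext
    · simp
    · simp [← Nat.cast_mul, Nat.div_mul_cancel hd]
  refine ⟨⟨(a, d), c⟩, ?_, ?_⟩
  · simp [echelonParams, ha, hd, NeZero.ne, hca, hc]
  apply eq_of_le_of_comap_inl_le_of_map_snd_le
  · rw [echelonSubgroup, closure_le]
    rintro _ (rfl | rfl)
    · rw [SetLike.mem_coe, ← AddMonoidHom.inl_apply, ← mem_comap, hA]
      exact mem_zmultiples _
    · exact hcd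
  · rw [hA, comap_inl_echelonSubgroup hd hd0 hc]
  · rw [hD, map_snd_echelonSubgroup]

theorem card_addSubgroup_eq_card_echelonParams [NeZero m] [NeZero n] :
    Nat.card (AddSubgroup (ZMod m × ZMod n)) = #(echelonParams m n) := by
  have himage : (fun x : (_ : ℕ × ℕ) × ℕ => echelonSubgroup m n x.1.1 x.1.2 x.2) ''
      echelonParams m n = Set.univ :=
    Set.eq_univ_of_forall fun H => exists_mem_echelonParams_eq H
  rw [← Set.ncard_univ, ← himage, echelonSubgroup_injOn.ncard_image,
    Set.ncard_coe_finset]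

theorem card_echelonParams :
    #(echelonParams m n) = ∑ a ∈ m.divisors, ∑ d ∈ n.divisors, a.gcd (n / d) := by
  rw [echelonParams, card_sigma, sum_product]
  exact sum_congr rfl fun a ha => sum_congr rfl fun d _ =>
    Nat.card_filter_range_dvd_mul (Nat.pos_of_mem_divisors ha) _

end echelonSubgroup

/-- The total number of subgroups of `ℤ_m × ℤ_n` equals `Σ_{a ∣ m} Σ_{b ∣ n} gcd(a,b)`. -/
theorem card_addSubgroups_two (m n : ℕ) (hm : 0 < m) (hn : 0 < n) :
    Nat.card (AddSubgroup (ZMod m × ZMod n)) =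
      ∑ a ∈ m.divisors, ∑ b ∈ n.divisors, Nat.gcd a b := by
  have : NeZero m := ⟨hm.ne'⟩
  have : NeZero n := ⟨hn.ne'⟩
  rw [card_addSubgroup_eq_card_echelonParams, card_echelonParams]
  exact sum_congr rfl fun a _ => Nat.sum_div_divisors n a.gcd
end

section
/- Let (G,+) be a finite Abelian group and q ∈ ℕ+. For every subgroup V of G × ℤ_q there exist a unique positive divisor d of q, a unique subgroup H of G, and an element α ∈ G, unique modulo H, such that (q/d)·α ∈ H and V = {(k·α + β, k·d mod q) : 0 ≤ k ≤ q/d − 1, β ∈ H}. Consequently, if for each subgroup H of G a transversal S_H of the cosets of H in G is fixed, the map (H, α, d) ↦ V_{H,α,d} is a bijection between the set I_{G,q} = {(H, α, d) : H ≤ G, α ∈ S_H, d ∣ q, (q/d)·α ∈ H} and the set of all subgroups of G × ℤ_q. -/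
/-!
A subgroup `V ≤ G × ℤ_q` is recovered from three invariants: `H = {g | (g, 0) ∈ V}`, the
projection of `V` to `ℤ_q`, which is generated by a unique divisor `d` of `q`, and any `α` with
`(α, d) ∈ V`, which is determined modulo `H`. Conversely `V_{H,α,d}` is the subgroup generated
by `(α, d)` and `H × {0}`: as `(q/d) • (α, d) ∈ H × {0}`, its elements are the
`k • (α, d) + (β, 0)` with `0 ≤ k < q/d` and `β ∈ H`.
-/

open AddSubgroup

theorem Nat.div_pos_of_dvd {q d : ℕ} (hq : 0 < q) (hd : d ∣ q) : 0 < q / d :=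
  Nat.div_pos (Nat.le_of_dvd hq hd) (Nat.pos_of_dvd_of_pos hd hq)

section ZMultiplesSup

variable {A : Type*} [AddCommGroup A] {K : AddSubgroup A} {w w' : A}

theorem AddSubgroup.mem_zmultiples_sup_iff {m : ℕ} (hm : 0 < m) (hw : m • w ∈ K) {x : A} :
    x ∈ zmultiples w ⊔ K ↔ ∃ k < m, ∃ y ∈ K, x = k • w + y := by
  rw [mem_sup]
  constructor
  · rintro ⟨_, ⟨n, rfl⟩, z, hz, rfl⟩
    have hm' : (0 : ℤ) < m := by exact_mod_cast hm
    have hlt := Int.emod_lt_of_pos n hm'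
    refine ⟨(n % m).toNat, by omega, (n / m) • (m • w) + z, add_mem (zsmul_mem hw _) hz, ?_⟩
    have hn : n = n / m * m + ((n % m).toNat : ℕ) := by
      rw [Int.toNat_of_nonneg (Int.emod_nonneg n hm'.ne'), Int.ediv_mul_add_emod]
    change n • w + z = _
    conv_lhs => rw [hn, add_zsmul, mul_zsmul, natCast_zsmul, natCast_zsmul]
    abel
  · rintro ⟨k, -, y, hy, rfl⟩
    exact ⟨k • w, nsmul_mem (mem_zmultiples w) k, y, hy, rfl⟩

theorem AddSubgroup.zmultiples_sup_eq_of_sub_mem (h : w - w' ∈ K) :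
    zmultiples w ⊔ K = zmultiples w' ⊔ K := by
  suffices key : ∀ u u' : A, u - u' ∈ K → zmultiples u ⊔ K ≤ zmultiples u' ⊔ K from
    le_antisymm (key w w' h) (key w' w (by simpa using neg_mem h))
  intro u u' hu
  refine sup_le (zmultiples_le.2 ?_) le_sup_right
  rw [← add_sub_cancel u' u]
  exact add_mem (mem_sup_left (mem_zmultiples u')) (mem_sup_right hu)

end ZMultiplesSup

namespace ZMod

theorem div_nsmul_natCast_self {q d : ℕ} (hd : d ∣ q) : (q / d) • (d : ZMod q) = 0 := by
  rw [nsmul_eq_mul, ← Nat.cast_mul, Nat.div_mul_cancel hd, ZMod.natCast_self]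

theorem exists_dvd_eq_zmultiples_natCast {q : ℕ} (D : AddSubgroup (ZMod q)) :
    ∃ d : ℕ, d ∣ q ∧ D = zmultiples (d : ZMod q) := by
  obtain ⟨a, ha⟩ := Int.subgroup_cyclic (D.comap (Int.castAddHom (ZMod q)))
  rw [← zmultiples_eq_closure, ← Int.zmultiples_natAbs] at ha
  refine ⟨a.natAbs, ?_, ?_⟩
  · have hq : (q : ℤ) ∈ D.comap (Int.castAddHom (ZMod q)) := by simp
    rw [ha, Int.mem_zmultiples_iff] at hq
    exact_mod_cast hq
  · rw [← map_comap_eq_self_of_surjective (f := Int.castAddHom (ZMod q))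
      ZMod.intCast_surjective D, ha, AddMonoidHom.map_zmultiples]
    simp

theorem eq_of_zmultiples_natCast_eq_s4 {q d d' : ℕ} (hq : q ≠ 0) (hd : d ∣ q) (hd' : d' ∣ q)
    (h : zmultiples (d : ZMod q) = zmultiples (d' : ZMod q)) : d = d' := by
  have := congrArg (fun D : AddSubgroup (ZMod q) ↦ Nat.card D) h
  simp only [Nat.card_zmultiples, ZMod.addOrderOf_coe _ hq, Nat.gcd_eq_right hd,
    Nat.gcd_eq_right hd'] at this
  exact (Nat.div_eq_iff_eq_of_dvd_dvd hq hd hd').1 this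

end ZMod

section ProdZMod

variable {G : Type*} [AddCommGroup G] {q d d' : ℕ} {H H' : AddSubgroup G} {α α' : G}

/-- The paper's `V_{H,α,d}`, as the subgroup generated by `(α, d)` and `H × {0}`. -/
def prodZModSubgroup (q : ℕ) (H : AddSubgroup G) (α : G) (d : ℕ) : AddSubgroup (G × ZMod q) :=
  zmultiples (α, (d : ZMod q)) ⊔ H.map (AddMonoidHom.inl G (ZMod q))

theorem mem_prodZModSubgroup_iff (hq : 0 < q) (hd : d ∣ q) (hα : (q / d) • α ∈ H)
    {p : G × ZMod q} :
    p ∈ prodZModSubgroup q H α d ↔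
      ∃ k < q / d, ∃ β ∈ H, p = (k • α + β, ((k * d : ℕ) : ZMod q)) := by
  have hw : (q / d) • (α, (d : ZMod q)) ∈ H.map (AddMonoidHom.inl G (ZMod q)) :=
    ⟨_, hα, by rw [Prod.smul_mk, ZMod.div_nsmul_natCast_self hd]; rfl⟩
  rw [prodZModSubgroup, mem_zmultiples_sup_iff (Nat.div_pos_of_dvd hq hd) hw]
  simp [Prod.smul_mk, nsmul_eq_mul]

theorem coe_prodZModSubgroup (hq : 0 < q) (hd : d ∣ q) (hα : (q / d) • α ∈ H) :
    (prodZModSubgroup q H α d : Set (G × ZMod q)) =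
      {p | ∃ k : ℕ, k ≤ q / d - 1 ∧ ∃ β ∈ H,
        p = (k • α + β, ((k * d : ℕ) : ZMod q))} := by
  ext p
  rw [SetLike.mem_coe, mem_prodZModSubgroup_iff hq hd hα]
  simp only [Set.mem_ofPred_eq, Nat.lt_iff_le_pred (Nat.div_pos_of_dvd hq hd)]

theorem map_snd_prodZModSubgroup :
    (prodZModSubgroup q H α d).map (AddMonoidHom.snd G (ZMod q)) = zmultiples (d : ZMod q) := by
  rw [prodZModSubgroup, AddSubgroup.map_sup, AddMonoidHom.map_zmultiples, map_map,
    AddMonoidHom.snd_comp_inl, map_zero_eq_bot, sup_bot_eq]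
  rfl

theorem inl_mem_prodZModSubgroup_iff (hq : 0 < q) (hd : d ∣ q) (hα : (q / d) • α ∈ H)
    {g : G} :
    (g, (0 : ZMod q)) ∈ prodZModSubgroup q H α d ↔ g ∈ H := by
  refine ⟨fun hg ↦ ?_, fun hg ↦ mem_sup_right ⟨g, hg, rfl⟩⟩
  obtain ⟨k, hk, β, hβ, hp⟩ := (mem_prodZModSubgroup_iff hq hd hα).1 hg
  simp only [Prod.mk.injEq] at hp
  obtain ⟨rfl, hkd⟩ := hp
  have hkd_lt : k * d < q := mul_comm d k ▸ (Nat.lt_div_iff_mul_lt' hd k).1 hk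
  have hk0 : k * d = 0 :=
    Nat.eq_zero_of_dvd_of_lt ((ZMod.natCast_eq_zero_iff _ q).1 hkd.symm) hkd_lt
  rcases Nat.mul_eq_zero.1 hk0 with rfl | rfl
  · simpa using hβ
  · exact absurd (Nat.eq_zero_of_zero_dvd hd) hq.ne'

theorem comap_inl_prodZModSubgroup (hq : 0 < q) (hd : d ∣ q) (hα : (q / d) • α ∈ H) :
    (prodZModSubgroup q H α d).comap (AddMonoidHom.inl G (ZMod q)) = H :=
  ext fun _ ↦ inl_mem_prodZModSubgroup_iff hq hd hα

theorem prodZModSubgroup_inj (hq : 0 < q) (hd : d ∣ q) (hd' : d' ∣ q)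
    (hα : (q / d) • α ∈ H) (hα' : (q / d') • α' ∈ H')
    (h : prodZModSubgroup q H α d = prodZModSubgroup q H' α' d') :
    d = d' ∧ H = H' ∧ α - α' ∈ H := by
  have hdd' : d = d' := ZMod.eq_of_zmultiples_natCast_eq_s4 hq.ne' hd hd' <| by
    rw [← map_snd_prodZModSubgroup (H := H) (α := α), h, map_snd_prodZModSubgroup]
  have hHH' : H = H' := by
    rw [← comap_inl_prodZModSubgroup hq hd hα, h, comap_inl_prodZModSubgroup hq hd' hα']
  subst hdd' hHH'
  refine ⟨rfl, rfl, (inl_mem_prodZModSubgroup_iff hq hd hα).1 ?_⟩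
  have hsub : (α, (d : ZMod q)) - (α', (d : ZMod q)) ∈ prodZModSubgroup q H α d :=
    sub_mem (mem_sup_left (mem_zmultiples _)) (h ▸ mem_sup_left (mem_zmultiples _))
  rwa [Prod.mk_sub_mk, sub_self] at hsub

theorem prodZModSubgroup_congr (h : α - α' ∈ H) :
    prodZModSubgroup q H α d = prodZModSubgroup q H α' d :=
  zmultiples_sup_eq_of_sub_mem ⟨α - α', h, by simp⟩

theorem exists_eq_prodZModSubgroup (V : AddSubgroup (G × ZMod q)) :
    ∃ (d : ℕ) (H : AddSubgroup G) (α : G), d ∣ q ∧ (q / d) • α ∈ H ∧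
      V = prodZModSubgroup q H α d := by
  obtain ⟨d, hd, hV⟩ :=
    ZMod.exists_dvd_eq_zmultiples_natCast (V.map (AddMonoidHom.snd G (ZMod q)))
  obtain ⟨⟨α, _⟩, hαV, rfl⟩ : (d : ZMod q) ∈ V.map (AddMonoidHom.snd G (ZMod q)) :=
    hV ▸ mem_zmultiples _
  set H := V.comap (AddMonoidHom.inl G (ZMod q))
  have hαH : (q / d) • α ∈ H := by
    have := nsmul_mem hαV (q / d)
    rwa [Prod.smul_mk, ZMod.div_nsmul_natCast_self hd] at this
  refine ⟨d, H, α, hd, hαH, le_antisymm (fun p hp ↦ ?_) ?_⟩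
  · obtain ⟨n, hn⟩ : p.2 ∈ zmultiples (d : ZMod q) := hV ▸ ⟨p, hp, rfl⟩
    change n • (d : ZMod q) = p.2 at hn
    have hrest : p.1 - n • α ∈ H := by
      have := sub_mem hp (zsmul_mem hαV n)
      rwa [Prod.smul_mk, hn, show p - (n • α, p.2) = (p.1 - n • α, 0) by ext <;> simp] at this
    rw [← add_sub_cancel (n • (α, (d : ZMod q))) p]
    refine add_mem (mem_sup_left (zsmul_mem (mem_zmultiples _) n))
      (mem_sup_right ⟨_, hrest, ?_⟩)
    ext <;> simp [hn]
  · exact sup_le (zmultiples_le.2 hαV) (map_le_iff_le_comap.2 le_rfl)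

end ProdZMod

theorem subgroups_of_prod_zmod_general {G : Type*} [AddCommGroup G] (q : ℕ) (hq : 0 < q)
    (S : AddSubgroup G → Set G)
    (hS : ∀ H : AddSubgroup G, ∀ x : G, ∃! y, y ∈ S H ∧ x - y ∈ H) :
    (∀ V : AddSubgroup (G × ZMod q),
      ∃ (d : ℕ) (H : AddSubgroup G) (α : G), d ∣ q ∧ (q / d) • α ∈ H ∧
        (V : Set (G × ZMod q)) =
          {p : G × ZMod q | ∃ k : ℕ, k ≤ q / d - 1 ∧ ∃ β ∈ H,
            p = (k • α + β, ((k * d : ℕ) : ZMod q))} ∧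
        ∀ (d' : ℕ) (H' : AddSubgroup G) (α' : G), d' ∣ q → (q / d') • α' ∈ H' →
          (V : Set (G × ZMod q)) =
            {p : G × ZMod q | ∃ k : ℕ, k ≤ q / d' - 1 ∧ ∃ β ∈ H',
              p = (k • α' + β, ((k * d' : ℕ) : ZMod q))} →
          d' = d ∧ H' = H ∧ α' - α ∈ H) ∧
    (∃ f : {x : AddSubgroup G × G × ℕ //
        x.2.1 ∈ S x.1 ∧ x.2.2 ∣ q ∧ (q / x.2.2) • x.2.1 ∈ x.1} →
          AddSubgroup (G × ZMod q),
      Function.Bijective f ∧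
      ∀ x, ((f x : AddSubgroup (G × ZMod q)) : Set (G × ZMod q)) =
        {p : G × ZMod q | ∃ k : ℕ, k ≤ q / x.1.2.2 - 1 ∧ ∃ β ∈ x.1.1,
          p = (k • x.1.2.1 + β, ((k * x.1.2.2 : ℕ) : ZMod q))}) := by
  refine ⟨fun V ↦ ?_, fun x ↦ prodZModSubgroup q x.1.1 x.1.2.1 x.1.2.2, ⟨?_, ?_⟩,
    fun x ↦ coe_prodZModSubgroup hq x.2.2.1 x.2.2.2⟩
  · obtain ⟨d, H, α, hd, hα, rfl⟩ := exists_eq_prodZModSubgroup V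
    refine ⟨d, H, α, hd, hα, coe_prodZModSubgroup hq hd hα, fun d' H' α' hd' hα' hV ↦ ?_⟩
    rw [← coe_prodZModSubgroup hq hd' hα'] at hV
    obtain ⟨rfl, rfl, hαα'⟩ :=
      prodZModSubgroup_inj hq hd' hd hα' hα (SetLike.coe_injective hV).symm
    exact ⟨rfl, rfl, hαα'⟩
  · rintro ⟨⟨H, α, d⟩, hαS, hd, hα⟩ ⟨⟨H', α', d'⟩, hαS', hd', hα'⟩ h
    obtain ⟨rfl, rfl, hαα'⟩ := prodZModSubgroup_inj hq hd hd' hα hα' h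
    obtain rfl : α = α' := (hS H α).unique ⟨hαS, by simp⟩ ⟨hαS', hαα'⟩
    rfl
  · intro V
    obtain ⟨d, H, α, hd, hα, rfl⟩ := exists_eq_prodZModSubgroup V
    obtain ⟨y, ⟨hyS, hαy⟩, -⟩ := hS H α
    have hy : (q / d) • y ∈ H := by simpa [smul_sub] using sub_mem hα (nsmul_mem hαy (q / d))
    exact ⟨⟨(H, y, d), hyS, hd, hy⟩, (prodZModSubgroup_congr hαy).symm⟩

/-- Every subgroup `V` of `G × ℤ_q` arises as `V_{H,α,d}` for a unique divisor `d ∣ q`,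
a unique subgroup `H ≤ G` and an element `α ∈ G` unique modulo `H` with `(q/d)·α ∈ H`;
consequently, fixing a transversal `S H` of the cosets of each subgroup `H` of `G`,
the map `(H,α,d) ↦ V_{H,α,d}` is a bijection between
`I_{G,q} = {(H,α,d) : H ≤ G, α ∈ S H, d ∣ q, (q/d)·α ∈ H}` and the set of subgroups of
`G × ℤ_q`. -/
theorem subgroups_of_prod_zmod {G : Type*} [AddCommGroup G] [Fintype G] (q : ℕ) (hq : 0 < q)
    (S : AddSubgroup G → Set G)
    (hS : ∀ H : AddSubgroup G, ∀ x : G, ∃! y, y ∈ S H ∧ x - y ∈ H) :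
    (∀ V : AddSubgroup (G × ZMod q),
      ∃ (d : ℕ) (H : AddSubgroup G) (α : G), d ∣ q ∧ (q / d) • α ∈ H ∧
        (V : Set (G × ZMod q)) =
          {p : G × ZMod q | ∃ k : ℕ, k ≤ q / d - 1 ∧ ∃ β ∈ H,
            p = (k • α + β, ((k * d : ℕ) : ZMod q))} ∧
        ∀ (d' : ℕ) (H' : AddSubgroup G) (α' : G), d' ∣ q → (q / d') • α' ∈ H' →
          (V : Set (G × ZMod q)) =
            {p : G × ZMod q | ∃ k : ℕ, k ≤ q / d' - 1 ∧ ∃ β ∈ H',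
              p = (k • α' + β, ((k * d' : ℕ) : ZMod q))} →
          d' = d ∧ H' = H ∧ α' - α ∈ H) ∧
    (∃ f : {x : AddSubgroup G × G × ℕ //
        x.2.1 ∈ S x.1 ∧ x.2.2 ∣ q ∧ (q / x.2.2) • x.2.1 ∈ x.1} →
          AddSubgroup (G × ZMod q),
      Function.Bijective f ∧
      ∀ x, ((f x : AddSubgroup (G × ZMod q)) : Set (G × ZMod q)) =
        {p : G × ZMod q | ∃ k : ℕ, k ≤ q / x.1.2.2 - 1 ∧ ∃ β ∈ x.1.1,
          p = (k • x.1.2.1 + β, ((k * x.1.2.2 : ℕ) : ZMod q))}) :=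
  subgroups_of_prod_zmod_general q hq S hS
end

section
/- Let m, n ∈ ℕ+ and let a ∣ m, b ∣ n, 0 ≤ s ≤ a−1 with a ∣ (n/b)·s, and let V_{a,b,s} be the subgroup of ℤ_m × ℤ_n generated by (a,0) and (s,b). Then the set S_{a,b} = {0,1,…,a−1} × {0,1,…,b−1} is a complete system of representatives of the cosets of V_{a,b,s} in ℤ_m × ℤ_n; that is, the elements of S_{a,b} are pairwise incongruent modulo V_{a,b,s}, and for every (x,y) ∈ ℤ_m × ℤ_n there is a (unique) (x',y') ∈ S_{a,b} with (x,y) − (x',y') ∈ V_{a,b,s}. -/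
/-!
Membership of `(x, y)` in `V_{a,b,s}` means `x ≡ i a + j s (mod m)` and `y ≡ j b (mod n)` for
some integers `i, j`. For two points of `S_{a,b}` the second congruence, read modulo `b ∣ n`,
forces `y' = y''`; then `n ∣ j b`, so `n / b ∣ j` and hence `a ∣ j s` by `a ∣ (n / b) s`, and the
first congruence read modulo `a ∣ m` forces `x' = x''`. Conversely, dividing `y` by `b` with
quotient `j`, and then `x - j s` by `a`, exhibits a representative in `S_{a,b}`.
-/

theorem AddSubgroup.mem_closure_prod_pair_iff {G H : Type*} [AddCommGroup G] [AddCommGroup H]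
    {g₁ g₂ : G} {h : H} {u : G × H} :
    u ∈ AddSubgroup.closure {(g₁, 0), (g₂, h)} ↔
      ∃ i j : ℤ, i • g₁ + j • g₂ = u.1 ∧ j • h = u.2 := by
  simp [AddSubgroup.mem_closure_pair, Prod.ext_iff]

theorem AddSubgroup.existsUnique_sub_mem {G ι : Type*} [AddCommGroup G] (V : AddSubgroup G)
    {P : ι → Prop} {f : ι → G} (hinj : ∀ i j, P i → P j → f i - f j ∈ V → i = j)
    (hsurj : ∀ g, ∃ i, P i ∧ g - f i ∈ V) (g : G) : ∃! i, P i ∧ g - f i ∈ V := by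
  obtain ⟨i, hi, hgi⟩ := hsurj g
  refine ⟨i, ⟨hi, hgi⟩, fun j ⟨hj, hgj⟩ => hinj j i hj hi ?_⟩
  simpa only [sub_sub_sub_cancel_left] using V.sub_mem hgi hgj

theorem ZMod.intCast_prod_sub_mem_closure_iff {m n a b s : ℕ} (x₁ y₁ x₂ y₂ : ℤ) :
    ((x₁ : ZMod m), (y₁ : ZMod n)) - ((x₂ : ZMod m), (y₂ : ZMod n)) ∈
        AddSubgroup.closure {((a : ZMod m), (0 : ZMod n)), ((s : ZMod m), (b : ZMod n))} ↔
      ∃ i j : ℤ, (m : ℤ) ∣ x₁ - x₂ - (i * a + j * s) ∧ (n : ℤ) ∣ y₁ - y₂ - j * b := by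
  simp only [AddSubgroup.mem_closure_prod_pair_iff, zsmul_eq_mul, Prod.fst_sub, Prod.snd_sub,
    ← ZMod.intCast_eq_intCast_iff_dvd_sub]
  push_cast
  rfl

theorem Nat.eq_of_intCast_dvd_sub {a x y : ℕ} (hx : x < a) (hy : y < a) (h : (a : ℤ) ∣ x - y) :
    x = y :=
  ((Nat.modEq_iff_dvd.2 h).eq_of_lt_of_lt hy hx).symm

theorem Int.dvd_of_natCast_dvd_mul_right {n b : ℕ} {j : ℤ} (hb : b ∣ n) (hb0 : b ≠ 0)
    (h : (n : ℤ) ∣ j * b) : ((n / b : ℕ) : ℤ) ∣ j := by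
  rw [← Nat.div_mul_cancel hb, Nat.cast_mul] at h
  exact (mul_dvd_mul_iff_right (by exact_mod_cast hb0)).1 h

theorem Int.exists_sub_eq_mul_add_mul_and_sub_eq_mul {a b : ℕ} (s : ℕ) (ha : 0 < a) (hb : 0 < b)
    (x y : ℤ) :
    ∃ q₁ < a, ∃ q₂ < b, ∃ i j : ℤ, x - q₁ = i * a + j * s ∧ y - q₂ = j * b := by
  have ha' : (a : ℤ) ≠ 0 := by exact_mod_cast ha.ne'
  have hb' : (b : ℤ) ≠ 0 := by exact_mod_cast hb.ne'
  set j := y / b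
  set t := x - j * s
  obtain ⟨q₁, hq₁⟩ := Int.eq_ofNat_of_zero_le (Int.emod_nonneg t ha')
  obtain ⟨q₂, hq₂⟩ := Int.eq_ofNat_of_zero_le (Int.emod_nonneg y hb')
  refine ⟨q₁, ?_, q₂, ?_, t / a, j, ?_, ?_⟩
  · have := Int.emod_lt_of_pos t (by omega : (0 : ℤ) < a); omega
  · have := Int.emod_lt_of_pos y (by omega : (0 : ℤ) < b); omega
  · linear_combination (Int.mul_ediv_add_emod t a).symm + hq₁
  · linear_combination (Int.mul_ediv_add_emod y b).symm + hq₂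

theorem eq_of_dvd_sub_of_dvd_sub {m n a b s x₁ y₁ x₂ y₂ : ℕ} {i j : ℤ} (ha : a ∣ m) (hb : b ∣ n)
    (hdvd : a ∣ n / b * s) (hx₁ : x₁ < a) (hy₁ : y₁ < b) (hx₂ : x₂ < a) (hy₂ : y₂ < b)
    (hxm : (m : ℤ) ∣ x₁ - x₂ - (i * a + j * s)) (hyn : (n : ℤ) ∣ y₁ - y₂ - j * b) :
    x₁ = x₂ ∧ y₁ = y₂ := by
  have hy : y₁ = y₂ := by
    refine Nat.eq_of_intCast_dvd_sub hy₁ hy₂ ?_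
    have := (Int.natCast_dvd_natCast.2 hb).trans hyn
    simpa using this.add (dvd_mul_left (b : ℤ) j)
  subst hy
  have hj : ((n / b : ℕ) : ℤ) ∣ j :=
    Int.dvd_of_natCast_dvd_mul_right hb (by omega) (by simpa using hyn)
  have hjs : (a : ℤ) ∣ j * s :=
    (Int.natCast_dvd_natCast.2 hdvd).trans (by push_cast; exact mul_dvd_mul_right hj _)
  refine ⟨Nat.eq_of_intCast_dvd_sub hx₁ hx₂ ?_, rfl⟩
  have := (Int.natCast_dvd_natCast.2 ha).trans hxm
  simpa using this.add ((dvd_mul_left (a : ℤ) i).add hjs)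

section

variable {m n a b s : ℕ}

theorem eq_of_natCast_prod_sub_mem_closure (ha : a ∣ m) (hb : b ∣ n) (hdvd : a ∣ n / b * s)
    {q r : ℕ × ℕ} (hq : q.1 < a ∧ q.2 < b) (hr : r.1 < a ∧ r.2 < b)
    (h : ((q.1 : ZMod m), (q.2 : ZMod n)) - ((r.1 : ZMod m), (r.2 : ZMod n)) ∈
      AddSubgroup.closure {((a : ZMod m), (0 : ZMod n)), ((s : ZMod m), (b : ZMod n))}) :
    q = r := by
  obtain ⟨i, j, hi, hj⟩ := (ZMod.intCast_prod_sub_mem_closure_iff q.1 q.2 r.1 r.2).1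
    (by simpa only [Int.cast_natCast] using h)
  exact Prod.ext_iff.2 (eq_of_dvd_sub_of_dvd_sub ha hb hdvd hq.1 hq.2 hr.1 hr.2 hi hj)

theorem exists_natCast_prod_sub_mem_closure (ha : 0 < a) (hb : 0 < b) (p : ZMod m × ZMod n) :
    ∃ q : ℕ × ℕ, (q.1 < a ∧ q.2 < b) ∧ p - ((q.1 : ZMod m), (q.2 : ZMod n)) ∈
      AddSubgroup.closure {((a : ZMod m), (0 : ZMod n)), ((s : ZMod m), (b : ZMod n))} := by
  obtain ⟨x, hx⟩ := ZMod.intCast_surjective p.1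
  obtain ⟨y, hy⟩ := ZMod.intCast_surjective p.2
  obtain ⟨q₁, hq₁, q₂, hq₂, i, j, hxq, hyq⟩ :=
    Int.exists_sub_eq_mul_add_mul_and_sub_eq_mul s ha hb x y
  refine ⟨(q₁, q₂), ⟨hq₁, hq₂⟩, ?_⟩
  have := ZMod.intCast_prod_sub_mem_closure_iff (m := m) (n := n) (a := a) (b := b)
    (s := s) x y q₁ q₂ |>.2 ⟨i, j, by simp [hxq], by simp [hyq]⟩
  simpa only [hx, hy, Int.cast_natCast] using this

end

theorem transversal_Vabs_general (m n : ℕ) (hm : 0 < m) (hn : 0 < n) (a b s : ℕ)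
    (ha : a ∣ m) (hb : b ∣ n) (hdvd : a ∣ (n / b) * s) :
    (∀ x' y' x'' y'' : ℕ, x' < a → y' < b → x'' < a → y'' < b →
      ((x' : ZMod m), (y' : ZMod n)) - ((x'' : ZMod m), (y'' : ZMod n)) ∈
        (AddSubgroup.closure {((a : ZMod m), (0 : ZMod n)), ((s : ZMod m), (b : ZMod n))} :
          AddSubgroup (ZMod m × ZMod n)) →
      x' = x'' ∧ y' = y'') ∧
    (∀ p : ZMod m × ZMod n, ∃! q : ℕ × ℕ, q.1 < a ∧ q.2 < b ∧
      p - ((q.1 : ZMod m), (q.2 : ZMod n)) ∈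
        (AddSubgroup.closure {((a : ZMod m), (0 : ZMod n)), ((s : ZMod m), (b : ZMod n))} :
          AddSubgroup (ZMod m × ZMod n))) := by
  refine ⟨fun x' y' x'' y'' hx' hy' hx'' hy'' h => Prod.ext_iff.1 <|
    eq_of_natCast_prod_sub_mem_closure (q := (x', y')) (r := (x'', y'')) ha hb hdvd
      ⟨hx', hy'⟩ ⟨hx'', hy''⟩ h, fun p => ?_⟩
  simpa only [and_assoc] using AddSubgroup.existsUnique_sub_mem _
    (fun _ _ => eq_of_natCast_prod_sub_mem_closure ha hb hdvd)
    (exists_natCast_prod_sub_mem_closure (Nat.pos_of_dvd_of_pos ha hm)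
      (Nat.pos_of_dvd_of_pos hb hn)) p

/-- For `a ∣ m`, `b ∣ n`, `0 ≤ s ≤ a-1` with `a ∣ (n/b)·s` and `V_{a,b,s}` the subgroup of
`ℤ_m × ℤ_n` generated by `(a,0)` and `(s,b)`, the set
`S_{a,b} = {0,…,a-1} × {0,…,b-1}` is a complete system of representatives of the cosets of
`V_{a,b,s}`: its elements are pairwise incongruent modulo `V_{a,b,s}`, and every element of
`ℤ_m × ℤ_n` is congruent to a (unique) element of `S_{a,b}` modulo `V_{a,b,s}`. -/
theorem transversal_Vabs (m n : ℕ) (hm : 0 < m) (hn : 0 < n) (a b s : ℕ)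
    (ha : a ∣ m) (hb : b ∣ n) (hs : s ≤ a - 1) (hdvd : a ∣ (n / b) * s) :
    (∀ x' y' x'' y'' : ℕ, x' < a → y' < b → x'' < a → y'' < b →
      ((x' : ZMod m), (y' : ZMod n)) - ((x'' : ZMod m), (y'' : ZMod n)) ∈
        (AddSubgroup.closure {((a : ZMod m), (0 : ZMod n)), ((s : ZMod m), (b : ZMod n))} :
          AddSubgroup (ZMod m × ZMod n)) →
      x' = x'' ∧ y' = y'') ∧
    (∀ p : ZMod m × ZMod n, ∃! q : ℕ × ℕ, q.1 < a ∧ q.2 < b ∧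
      p - ((q.1 : ZMod m), (q.2 : ZMod n)) ∈
        (AddSubgroup.closure {((a : ZMod m), (0 : ZMod n)), ((s : ZMod m), (b : ZMod n))} :
          AddSubgroup (ZMod m × ZMod n))) :=
  transversal_Vabs_general m n hm hn a b s ha hb hdvd
end
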